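/- For every closed expression e, the CESK machine and the CESK* machine (with store-allocated continuations) produce isomorphic reachable state sets: there is a bijection between executions such that at each step the CESK* continuation, when its address pointers are recursively dereferenced through the store, equals the CESK continuation. -/

import Mathlib

/- Statement 1: for every closed expression, the CESK machine and the CESK*
   machine (with store-allocated continuations) produce isomorphic reachable
   state sets: executions correspond step by step, and at each step the CESK*
   continuation, with its address pointers recursively dereferenced through
   the store, equals the CESK continuation. -/

inductive Exp : Type
  | ref : String → Exp
  | lam : String → Exp → Exp
  | app : Exp → Exp → Exp
deriving DecidableEq

def Exp.fv : Exp → List String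
  | .ref x => [x]
  | .lam x e => e.fv.filter (· ≠ x)
  | .app e₀ e₁ => e₀.fv ++ e₁.fv

def Exp.Closed (e : Exp) : Prop := e.fv = []

abbrev Addr := ℕ
abbrev Env := List (String × Addr)
abbrev Clo := Exp × Env

/- CESK machine: inductively defined continuations, store holds closures. -/

inductive Kont : Type
  | mt
  | ar (e : Exp) (ρ : Env) (κ : Kont)
  | fn (v : Exp) (ρ : Env) (κ : Kont)

abbrev Store := List (Addr × Clo)
abbrev CESKState := Exp × Env × Store × Kont

inductive CESKStep : CESKState → CESKState → Prop
  | var {x ρ σ κ a v ρ'} :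
      List.lookup x ρ = some a → List.lookup a σ = some (v, ρ') →
      CESKStep (.ref x, ρ, σ, κ) (v, ρ', σ, κ)
  | app {e₀ e₁ ρ σ κ} :
      CESKStep (.app e₀ e₁, ρ, σ, κ) (e₀, ρ, σ, .ar e₁ ρ κ)
  | arg {x e ρ σ e' ρ' κ} :
      CESKStep (.lam x e, ρ, σ, .ar e' ρ' κ) (e', ρ', σ, .fn (.lam x e) ρ κ)
  | beta {x e ρ σ y e' ρ' κ} {a : Addr} :
      List.lookup a σ = none →
      CESKStep (.lam x e, ρ, σ, .fn (.lam y e') ρ' κ)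
        (e', (y, a) :: ρ', (a, (Exp.lam x e, ρ)) :: σ, κ)

def injCESK (e : Exp) : CESKState := (e, [], [], .mt)

/- CESK* machine: continuations carry a pointer to the rest of the
   continuation, and the store maps addresses to closures or continuations. -/

inductive PKont : Type
  | mt
  | ar (e : Exp) (ρ : Env) (a : Addr)
  | fn (v : Exp) (ρ : Env) (a : Addr)

inductive Storable : Type
  | clo (c : Clo)
  | kont (κ : PKont)

abbrev PStore := List (Addr × Storable)
abbrev CESKPState := Exp × Env × PStore × PKont

inductive CESKPStep : CESKPState → CESKPState → Prop
  | var {x ρ σ κ a v ρ'} :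
      List.lookup x ρ = some a → List.lookup a σ = some (.clo (v, ρ')) →
      CESKPStep (.ref x, ρ, σ, κ) (v, ρ', σ, κ)
  | app {e₀ e₁ ρ σ κ} {a : Addr} :
      List.lookup a σ = none →
      CESKPStep (.app e₀ e₁, ρ, σ, κ)
        (e₀, ρ, (a, .kont κ) :: σ, .ar e₁ ρ a)
  | arg {x e ρ σ e' ρ' a} :
      CESKPStep (.lam x e, ρ, σ, .ar e' ρ' a) (e', ρ', σ, .fn (.lam x e) ρ a)
  | beta {x e ρ σ y e' ρ' κ} {b a : Addr} :
      List.lookup b σ = some (.kont κ) →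
      List.lookup a σ = none →
      CESKPStep (.lam x e, ρ, σ, .fn (.lam y e') ρ' b)
        (e', (y, a) :: ρ', (a, .clo (Exp.lam x e, ρ)) :: σ, κ)

def injCESKP (e : Exp) : CESKPState := (e, [], [], .mt)

/-- Unfolding a CESK* continuation into a CESK continuation by recursively
    dereferencing continuation addresses through the store. -/
inductive Unfold (σ : PStore) : PKont → Kont → Prop
  | mt : Unfold σ .mt .mt
  | ar {e ρ a κ' κc} :
      List.lookup a σ = some (.kont κ') → Unfold σ κ' κc →
      Unfold σ (.ar e ρ a) (.ar e ρ κc)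
  | fn {v ρ a κ' κc} :
      List.lookup a σ = some (.kont κ') → Unfold σ κ' κc →
      Unfold σ (.fn v ρ a) (.fn v ρ κc)

/-- Correspondence between CESK* and CESK states: same control and
    environment, the CESK store is the closure part of the CESK* store, and
    the CESK continuation is the unfolding of the CESK* continuation. -/
def Corr : CESKPState → CESKState → Prop
  | (e, ρ, σ, κ), (e', ρ', σ', κ') =>
      e = e' ∧ ρ = ρ' ∧
      (∀ (a : Addr) (c : Clo),
        List.lookup a σ' = some c ↔ List.lookup a σ = some (.clo c)) ∧
      Unfold σ κ κ'

/-- Exactly-n-step iteration of a relation. -/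
def StepN {α : Type _} (r : α → α → Prop) : ℕ → α → α → Prop
  | 0, a, b => a = b
  | n + 1, a, b => ∃ c, r a c ∧ StepN r n c b

/- Backwards, a CESK* run is mirrored by forgetting the continuation cells of its store: a fresh
CESK* address is fresh for the closure part too. Forwards, the CESK* machine must pick addresses
for its continuation cells, and they must never be claimed later by a closure the CESK run
allocates. Since CESK stores only grow, it suffices to choose them outside the final store of
the CESK run being simulated. -/

theorem List.lookup_cons_of_ne {α β : Type*} [BEq α] [LawfulBEq α] {a k : α} (b : β)
    (l : List (α × β)) (h : a ≠ k) : ((k, b) :: l).lookup a = l.lookup a := by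
  rw [List.lookup_cons, beq_false_of_ne h]

theorem exists_lookup_eq_none_and_lookup_eq_none {α β γ : Type*} [DecidableEq α] [Infinite α]
    (l : List (α × β)) (l' : List (α × γ)) : ∃ a, l.lookup a = none ∧ l'.lookup a = none := by
  obtain ⟨a, ha⟩ :=
    Infinite.exists_notMem_finset ((l.map Prod.fst).toFinset ∪ (l'.map Prod.fst).toFinset)
  simp only [Finset.mem_union, List.mem_toFinset, not_or] at ha
  refine ⟨a, List.lookup_eq_none_iff.2 ?_, List.lookup_eq_none_iff.2 ?_⟩
  all_goals
    rintro ⟨k, x⟩ hp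
    simp only [bne_iff_ne, ne_eq]
    rintro rfl
  exacts [ha.1 (List.mem_map.2 ⟨_, hp, rfl⟩), ha.2 (List.mem_map.2 ⟨_, hp, rfl⟩)]

namespace StepN

variable {α β : Type*} {r : α → α → Prop} {s : β → β → Prop}

theorem backward_invariant {P : α → Prop} (hP : ∀ {a a'}, r a a' → P a' → P a) {n : ℕ}
    {a a' : α} (h : StepN r n a a') (ha' : P a') : P a := by
  induction n generalizing a with
  | zero => exact h ▸ ha'
  | succ n ih =>
    obtain ⟨c, hac, hca'⟩ := h
    exact hP hac (ih hca')

theorem simulate (R : α → β → Prop) {G : α → Prop} (hG : ∀ {a a'}, r a a' → G a' → G a)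
    (hsim : ∀ {a a' b}, r a a' → G a' → R a b → ∃ b', s b b' ∧ R a' b')
    {n : ℕ} {a a' : α} {b : β} (h : StepN r n a a') (ha' : G a') (hab : R a b) :
    ∃ b', StepN s n b b' ∧ R a' b' := by
  induction n generalizing a b with
  | zero => exact ⟨b, rfl, h ▸ hab⟩
  | succ n ih =>
    obtain ⟨c, hac, hca'⟩ := h
    obtain ⟨d, hbd, hcd⟩ := hsim hac (backward_invariant (P := G) hG hca' ha') hab
    obtain ⟨b', hdb', hR'⟩ := ih hca' hcd
    exact ⟨b', ⟨d, hbd, hdb'⟩, hR'⟩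

end StepN

theorem Unfold.cons {σ : PStore} {κp : PKont} {κ : Kont} (h : Unfold σ κp κ) {a : Addr}
    (ha : σ.lookup a = none) (x : Storable) : Unfold ((a, x) :: σ) κp κ := by
  have hne : ∀ {b κ'}, σ.lookup b = some (.kont κ') → b ≠ a := by
    rintro b κ' hb rfl
    simp [ha] at hb
  induction h with
  | mt => exact .mt
  | ar hb _ ih => exact .ar (by rwa [List.lookup_cons_of_ne _ _ (hne hb)]) ih
  | fn hb _ ih => exact .fn (by rwa [List.lookup_cons_of_ne _ _ (hne hb)]) ih

def ClosuresAgree (σ : Store) (σp : PStore) : Prop :=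
  ∀ (a : Addr) (c : Clo), σ.lookup a = some c ↔ σp.lookup a = some (.clo c)

theorem corr_iff {e e' : Exp} {ρ ρ' : Env} {σp : PStore} {κp : PKont} {σ : Store} {κ : Kont} :
    Corr (e, ρ, σp, κp) (e', ρ', σ, κ) ↔
      e = e' ∧ ρ = ρ' ∧ ClosuresAgree σ σp ∧ Unfold σp κp κ :=
  Iff.rfl

namespace ClosuresAgree

variable {σ : Store} {σp : PStore}

theorem nil : ClosuresAgree [] [] := by
  simp [ClosuresAgree]

theorem lookup_eq_none (h : ClosuresAgree σ σp) {a : Addr} (ha : σp.lookup a = none) :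
    σ.lookup a = none := by
  rw [Option.eq_none_iff_forall_ne_some]
  intro c hc
  simp [(h a c).1 hc] at ha

theorem cons_kont (h : ClosuresAgree σ σp) {a : Addr} (ha : σ.lookup a = none) (κ : PKont) :
    ClosuresAgree σ ((a, .kont κ) :: σp) := by
  intro b c
  by_cases hb : b = a
  · subst hb
    simp [ha]
  · rw [List.lookup_cons_of_ne _ _ hb]
    exact h b c

theorem cons_clo (h : ClosuresAgree σ σp) (a : Addr) (c : Clo) :
    ClosuresAgree ((a, c) :: σ) ((a, .clo c) :: σp) := by
  intro b d
  by_cases hb : b = a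
  · subst hb
    simp
  · rw [List.lookup_cons_of_ne _ _ hb, List.lookup_cons_of_ne _ _ hb]
    exact h b d

end ClosuresAgree

def KontsFreshFor (σp : PStore) (σf : Store) : Prop :=
  ∀ (a : Addr) (κ : PKont), σp.lookup a = some (.kont κ) → σf.lookup a = none

namespace KontsFreshFor

variable {σp : PStore} {σf : Store}

theorem nil : KontsFreshFor [] σf := by
  simp [KontsFreshFor]

theorem cons_kont (h : KontsFreshFor σp σf) {a : Addr} (ha : σf.lookup a = none) (κ : PKont) :
    KontsFreshFor ((a, .kont κ) :: σp) σf := by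
  intro b κ' hb
  by_cases hba : b = a
  · exact hba ▸ ha
  · rw [List.lookup_cons_of_ne _ _ hba] at hb
    exact h b κ' hb

theorem cons_clo (h : KontsFreshFor σp σf) (a : Addr) (c : Clo) :
    KontsFreshFor ((a, .clo c) :: σp) σf := by
  intro b κ hb
  by_cases hba : b = a
  · simp [hba] at hb
  · rw [List.lookup_cons_of_ne _ _ hba] at hb
    exact h b κ hb

theorem lookup_eq_none (h : KontsFreshFor σp σf) {σ : Store} (hσ : ClosuresAgree σ σp)
    {a : Addr} (ha : σ.lookup a = none) (haf : σf.lookup a ≠ none) : σp.lookup a = none := by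
  match hp : σp.lookup a with
  | none => rfl
  | some (.clo c) => simp [(hσ a c).2 hp] at ha
  | some (.kont κ) => exact absurd (h a κ hp) haf

end KontsFreshFor

theorem CESKStep.lookup_eq_none_of_next {ς ς' : CESKState} (h : CESKStep ς ς') {a : Addr}
    (ha : ς'.2.2.1.lookup a = none) : ς.2.2.1.lookup a = none := by
  cases h with
  | beta =>
    rename_i b _
    by_cases hab : a = b
    · simp [hab] at ha
    · rwa [List.lookup_cons_of_ne _ _ hab] at ha
  | _ => exact ha

theorem CESKStep.simulate {σf : Store} {ς ς' : CESKState} {ςp : CESKPState}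
    (h : CESKStep ς ς') (hf : ∀ a, σf.lookup a = none → ς'.2.2.1.lookup a = none)
    (hc : Corr ςp ς) (hk : KontsFreshFor ςp.2.2.1 σf) :
    ∃ ςp', CESKPStep ςp ςp' ∧ Corr ςp' ς' ∧ KontsFreshFor ςp'.2.2.1 σf := by
  obtain ⟨e, ρ, σ, κ⟩ := ς
  obtain ⟨e, ρ, σp, κp⟩ := ςp
  obtain ⟨rfl, rfl, hσ, hκ⟩ := corr_iff.1 hc
  cases h with
  | var hx ha => exact ⟨_, .var hx ((hσ _ _).1 ha), ⟨rfl, rfl, hσ, hκ⟩, hk⟩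
  | app =>
    obtain ⟨a, hap, haf⟩ := exists_lookup_eq_none_and_lookup_eq_none σp σf
    refine ⟨_, .app hap, ⟨rfl, rfl, hσ.cons_kont (hσ.lookup_eq_none hap) κp, ?_⟩,
      hk.cons_kont haf κp⟩
    exact .ar List.lookup_cons_self (hκ.cons hap _)
  | arg =>
    cases hκ with
    | ar hb hκ' => exact ⟨_, .arg, ⟨rfl, rfl, hσ, .fn hb hκ'⟩, hk⟩
  | beta ha =>
    rename_i a
    cases hκ with
    | fn hb hκ' =>
      have haf : σf.lookup a ≠ none := fun haf => by simpa using hf a haf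
      have hap := hk.lookup_eq_none hσ ha haf
      exact ⟨_, .beta hb hap, ⟨rfl, rfl, hσ.cons_clo _ _, hκ'.cons hap _⟩, hk.cons_clo _ _⟩

theorem CESKPStep.simulate {ςp ςp' : CESKPState} {ς : CESKState} (h : CESKPStep ςp ςp')
    (hc : Corr ςp ς) : ∃ ς', CESKStep ς ς' ∧ Corr ςp' ς' := by
  obtain ⟨e, ρ, σp, κp⟩ := ςp
  obtain ⟨e, ρ, σ, κ⟩ := ς
  obtain ⟨rfl, rfl, hσ, hκ⟩ := corr_iff.1 hc
  cases h with
  | var hx ha => exact ⟨_, .var hx ((hσ _ _).2 ha), rfl, rfl, hσ, hκ⟩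
  | app ha =>
    exact ⟨_, .app, rfl, rfl, hσ.cons_kont (hσ.lookup_eq_none ha) _,
      .ar List.lookup_cons_self (hκ.cons ha _)⟩
  | arg =>
    cases hκ with
    | ar hb hκ' => exact ⟨_, .arg, rfl, rfl, hσ, .fn hb hκ'⟩
  | beta hb ha =>
    cases hκ with
    | fn hb' hκ' =>
      rw [hb] at hb'
      cases hb'
      exact ⟨_, .beta (hσ.lookup_eq_none ha), rfl, rfl, hσ.cons_clo _ _, hκ'.cons ha _⟩

theorem cesk_ceskstar_lockstep_general (e : Exp) (n : ℕ) :
    (∀ ς : CESKState, StepN CESKStep n (injCESK e) ς →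
      ∃ ςp : CESKPState, StepN CESKPStep n (injCESKP e) ςp ∧ Corr ςp ς) ∧
    (∀ ςp : CESKPState, StepN CESKPStep n (injCESKP e) ςp →
      ∃ ς : CESKState, StepN CESKStep n (injCESK e) ς ∧ Corr ςp ς) := by
  have hinit : Corr (injCESKP e) (injCESK e) := ⟨rfl, rfl, ClosuresAgree.nil, .mt⟩
  refine ⟨fun ς h => ?_, fun ςp h => ?_⟩
  · obtain ⟨ςp, hp, hc, -⟩ :=
      h.simulate (fun ς' ςp => Corr ςp ς' ∧ KontsFreshFor ςp.2.2.1 ς.2.2.1)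
      (G := fun ς' => ∀ a, ς.2.2.1.lookup a = none → ς'.2.2.1.lookup a = none)
      (fun hs hG a ha => hs.lookup_eq_none_of_next (hG a ha))
      (fun hs hG hR => hs.simulate hG hR.1 hR.2) (fun _ => id) ⟨hinit, KontsFreshFor.nil⟩
    exact ⟨ςp, hp, hc⟩
  · exact h.simulate (fun ςp ς => Corr ςp ς) (G := fun _ => True) (fun _ _ => trivial)
      (fun hs _ hR => hs.simulate hR) trivial hinit

theorem cesk_ceskstar_lockstep (e : Exp) (he : e.Closed) (n : ℕ) :
    (∀ ς : CESKState, StepN CESKStep n (injCESK e) ς →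
      ∃ ςp : CESKPState, StepN CESKPStep n (injCESKP e) ςp ∧ Corr ςp ς) ∧
    (∀ ςp : CESKPState, StepN CESKPStep n (injCESKP e) ςp →
      ∃ ς : CESKState, StepN CESKStep n (injCESK e) ς ∧ Corr ςp ς) :=
  cesk_ceskstar_lockstep_general e n
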